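/- arXiv:1805.09650 — 7 statements merged into one kernel-verified Lean document; each statement's English description precedes it below -/
import Mathlib

section
/- Let a ≥ 1, let S ⊂ ℝ be a finite set, and for each x ∈ S let D_x be an a×a complex matrix; let B(k) = ∑_{x∈S} e^{2πikx} D_x. Then for every ε > 0, the ℂ-subalgebra of Mat_a(ℂ) generated by the family {B(k) : 0 ≤ k < ε} is equal to the ℂ-subalgebra generated by {D_x : x ∈ S}; in particular it equals the ℂ-subalgebra generated by {B(k) : k ∈ ℝ}. -/
open Finset Matrix

lemma aux_span {n : ℕ} {M : Matrix (Fin n) (Fin n) ℂ} (hM : IsUnit M.det)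
    {V : Type*} [AddCommGroup V] [Module ℂ V] (d b : Fin n → V)
    (hb : ∀ i, b i = ∑ j, M i j • d j) (j : Fin n) :
    d j ∈ Submodule.span ℂ (Set.range b) := by
  have hd : (∑ i, M⁻¹ j i • b i) = d j := by
    simp_rw [hb, Finset.smul_sum, smul_smul]
    rw [Finset.sum_comm]
    have h1 : ∀ l : Fin n, (∑ i, M⁻¹ j i * M i l) = (1 : Matrix (Fin n) (Fin n) ℂ) j l := by
      intro l
      rw [← Matrix.nonsing_inv_mul M hM]
      simp [Matrix.mul_apply]
    calc ∑ l, ∑ i, (M⁻¹ j i * M i l) • d l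
        = ∑ l, ((1 : Matrix (Fin n) (Fin n) ℂ) j l) • d l := by
          refine Finset.sum_congr rfl fun l _ => ?_
          rw [← Finset.sum_smul, h1]
      _ = d j := by simp [Matrix.one_apply]
  rw [← hd]
  exact Submodule.sum_mem _ fun i _ =>
    Submodule.smul_mem _ _ (Submodule.subset_span ⟨i, rfl⟩)

lemma exp_two_pi_inj {θ₁ θ₂ : ℝ} (h : Complex.exp (2 * Real.pi * Complex.I * θ₁)
    = Complex.exp (2 * Real.pi * Complex.I * θ₂)) (hlt : |θ₁ - θ₂| < 1) : θ₁ = θ₂ := by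
  rw [Complex.exp_eq_exp_iff_exists_int] at h
  obtain ⟨m, hm⟩ := h
  have hpi : (2 * (Real.pi : ℂ) * Complex.I) ≠ 0 := by
    simp [Real.pi_ne_zero, Complex.I_ne_zero]
  have h2 : (θ₁ : ℂ) = (θ₂ : ℂ) + m := by
    have : (2 * (Real.pi : ℂ) * Complex.I) * θ₁
        = (2 * (Real.pi : ℂ) * Complex.I) * (θ₂ + m) := by linear_combination hm
    exact mul_left_cancel₀ hpi this
  have h3 : θ₁ = θ₂ + m := by exact_mod_cast h2
  have : |(m : ℝ)| < 1 := by rw [h3] at hlt; simpa using hlt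
  have hm0 : m = 0 := by
    by_contra h0
    have : (1 : ℝ) ≤ |(m : ℝ)| := by
      rw [← Int.cast_abs]
      exact_mod_cast Int.one_le_abs (by omega)
    linarith
  rw [hm0] at h3
  simpa using h3

/-- For every `ε > 0`, the ℂ-algebra generated by `{B(k) : 0 ≤ k < ε}`, where
`B(k) = ∑_{x ∈ S} e^{2πikx} D_x`, equals the ℂ-algebra generated by the digit
matrices `{D_x : x ∈ S}`; in particular it equals the ℂ-algebra generated by
the whole family `{B(k) : k ∈ ℝ}`. -/
theorem stmt_1 (a : ℕ) (ha : 1 ≤ a) (S : Finset ℝ)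
    (D : ℝ → Matrix (Fin a) (Fin a) ℂ)
    (B : ℝ → Matrix (Fin a) (Fin a) ℂ)
    (hB : ∀ k : ℝ, B k =
      ∑ x ∈ S, Complex.exp (2 * (Real.pi : ℂ) * Complex.I * (k : ℂ) * (x : ℂ)) • D x)
    (ε : ℝ) (hε : 0 < ε) :
    Algebra.adjoin ℂ (B '' Set.Ico 0 ε) = Algebra.adjoin ℂ (D '' (S : Set ℝ)) ∧
    Algebra.adjoin ℂ (B '' Set.Ico 0 ε) = Algebra.adjoin ℂ (Set.range B) := by
  -- every B k lies in adjoin of D's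
  have hBk : ∀ k : ℝ, B k ∈ Algebra.adjoin ℂ (D '' (S : Set ℝ)) := by
    intro k
    rw [hB]
    exact Subalgebra.sum_mem _ fun x hx =>
      Subalgebra.smul_mem _ (Algebra.subset_adjoin (Set.mem_image_of_mem D (Finset.mem_coe.mpr hx))) _
  -- key: every D x, x ∈ S, lies in span of B '' Ico 0 ε
  have hDx : ∀ x ∈ S, D x ∈ Submodule.span ℂ (B '' Set.Ico 0 ε) := by
    intro x hx
    have hne : S.Nonempty := ⟨x, hx⟩
    set n := S.card with hn
    set f : Fin n → ℝ := fun i => (S.orderIsoOfFin rfl i : ℝ) with hf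
    have hfinj : Function.Injective f := fun i j h => by
      have := (S.orderIsoOfFin rfl).injective (Subtype.ext h)
      exact this
    have hfS : ∀ i, f i ∈ S := fun i => (S.orderIsoOfFin rfl i).2
    have hsurj : ∀ y ∈ S, ∃ j : Fin n, f j = y := by
      intro y hy
      obtain ⟨j, hj⟩ := (S.orderIsoOfFin (rfl : S.card = n)).surjective ⟨y, hy⟩
      exact ⟨j, congrArg Subtype.val hj⟩
    have hsum : ∀ g : ℝ → Matrix (Fin a) (Fin a) ℂ,
        (∑ j : Fin n, g (f j)) = ∑ y ∈ S, g y := by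
      intro g
      refine Finset.sum_nbij f (fun j _ => hfS j) (hfinj.injOn) ?_ (fun j _ => rfl)
      intro y hy
      obtain ⟨j, hj⟩ := hsurj y hy
      exact ⟨j, Finset.mem_coe.mpr (Finset.mem_univ j), hj⟩
    set C : ℝ := S.sup' hne (fun y => |y|) with hC
    have hC0 : 0 ≤ C := le_trans (abs_nonneg x) (Finset.le_sup' _ hx)
    set δ : ℝ := min (ε / (n + 1)) (1 / (2 * C + 1)) with hδ
    have hδpos : 0 < δ := lt_min (by positivity) (by positivity)
    -- k_i ∈ Ico 0 ε
    have hk : ∀ i : Fin n, (i : ℝ) * δ ∈ Set.Ico 0 ε := by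
      intro i
      constructor
      · positivity
      · have h1 : (i : ℝ) * δ ≤ (n : ℝ) * (ε / (n + 1)) := by
          apply mul_le_mul (by exact_mod_cast le_of_lt i.2) (min_le_left _ _)
            (le_of_lt hδpos) (by positivity)
        have h2 : (n : ℝ) * (ε / (n + 1)) < ε := by
          rw [mul_div_assoc']
          rw [div_lt_iff₀ (by positivity)]
          nlinarith [hε]
        linarith
    -- z values
    set z : Fin n → ℂ := fun j => Complex.exp (2 * Real.pi * Complex.I * (δ * f j)) with hz
    have hzinj : Function.Injective z := by
      intro i j h
      apply hfinj
      have habs : |δ * f i - δ * f j| < 1 := by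
        rw [← mul_sub, abs_mul, abs_of_pos hδpos]
        have hfi : |f i| ≤ C := Finset.le_sup' _ (hfS i)
        have hfj : |f j| ≤ C := Finset.le_sup' _ (hfS j)
        have h1 : |f i - f j| ≤ 2 * C := by
          calc |f i - f j| ≤ |f i| + |f j| := abs_sub _ _
            _ ≤ 2 * C := by linarith
        have hδle : δ ≤ 1 / (2 * C + 1) := min_le_right _ _
        calc δ * |f i - f j| ≤ (1 / (2 * C + 1)) * (2 * C) :=
              mul_le_mul hδle h1 (abs_nonneg _) (by positivity)
          _ < 1 := by rw [div_mul_eq_mul_div, div_lt_one (by positivity)]; linarith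
      have heq : δ * f i = δ * f j := by
        apply exp_two_pi_inj ?_ habs
        have e1 : (2 * (Real.pi : ℂ) * Complex.I * ((δ * f i : ℝ) : ℂ))
            = 2 * (Real.pi : ℂ) * Complex.I * ((δ : ℂ) * (f i : ℂ)) := by push_cast; ring
        have e2 : (2 * (Real.pi : ℂ) * Complex.I * ((δ * f j : ℝ) : ℂ))
            = 2 * (Real.pi : ℂ) * Complex.I * ((δ : ℂ) * (f j : ℂ)) := by push_cast; ring
        rw [e1, e2]
        exact h
      exact mul_left_cancel₀ (ne_of_gt hδpos) heq
    set M : Matrix (Fin n) (Fin n) ℂ := fun i j => z j ^ (i : ℕ) with hM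
    have hMdet : IsUnit M.det := by
      have : M = (Matrix.vandermonde z)ᵀ := by
        ext i j
        rfl
      rw [this, Matrix.det_transpose, Matrix.det_vandermonde]
      rw [isUnit_iff_ne_zero]
      apply Finset.prod_ne_zero_iff.mpr
      intro i _
      apply Finset.prod_ne_zero_iff.mpr
      intro j hj
      rw [Finset.mem_Ioi] at hj
      exact sub_ne_zero_of_ne fun hzz => (ne_of_gt hj) (hzinj hzz)
    have hbM : ∀ i : Fin n, B ((i : ℝ) * δ) = ∑ j, M i j • D (f j) := by
      intro i
      rw [hB]
      rw [← hsum (fun y => Complex.exp (2 * (Real.pi : ℂ) * Complex.I * (((i : ℝ) * δ : ℝ) : ℂ) * (y : ℂ)) • D y)]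
      refine Finset.sum_congr rfl fun j _ => ?_
      have : Complex.exp (2 * (Real.pi : ℂ) * Complex.I * (((i : ℝ) * δ : ℝ) : ℂ) * ((f j : ℝ) : ℂ)) = z j ^ (i : ℕ) := by
        rw [hz, ← Complex.exp_nat_mul]
        congr 1
        push_cast
        ring
      rw [hM]
      simp only []
      rw [this]
    obtain ⟨j, hj⟩ := hsurj x hx
    rw [← hj]
    have := aux_span hMdet (fun j => D (f j)) (fun i => B ((i : ℝ) * δ)) hbM j
    refine Submodule.span_mono ?_ this
    rintro _ ⟨i, rfl⟩
    exact ⟨(i : ℝ) * δ, hk i, rfl⟩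
  have hDx' : ∀ x ∈ S, D x ∈ Algebra.adjoin ℂ (B '' Set.Ico 0 ε) := by
    intro x hx
    have := hDx x hx
    have hle : Submodule.span ℂ (B '' Set.Ico 0 ε)
        ≤ Subalgebra.toSubmodule (Algebra.adjoin ℂ (B '' Set.Ico 0 ε)) :=
      Submodule.span_le.mpr Algebra.subset_adjoin
    exact hle this
  have h1 : Algebra.adjoin ℂ (B '' Set.Ico 0 ε) = Algebra.adjoin ℂ (D '' (S : Set ℝ)) := by
    apply le_antisymm
    · apply Algebra.adjoin_le
      rintro _ ⟨k, _, rfl⟩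
      exact hBk k
    · apply Algebra.adjoin_le
      rintro _ ⟨x, hx, rfl⟩
      exact hDx' x hx
  refine ⟨h1, le_antisymm ?_ ?_⟩
  · apply Algebra.adjoin_le
    rintro _ ⟨k, _, rfl⟩
    exact Algebra.subset_adjoin ⟨k, rfl⟩
  · rw [h1]
    apply Algebra.adjoin_le
    rintro _ ⟨k, rfl⟩
    exact hBk k
end

section
/- Let a ≥ 1, let λ > 1 be a real number, and let B : ℝ → Mat_a(ℂ) be any function. For m ≥ 1 set B^{(m)}(k) = B(k)·B(λk)···B(λ^{m−1}k), and let 𝓑^{(m)} be the ℂ-subalgebra of Mat_a(ℂ) generated by {B^{(m)}(k) : k ∈ ℝ}. Then: (i) if m divides n, one has 𝓑^{(n)} ⊆ 𝓑^{(m)}; in particular 𝓑^{(n)} ⊆ 𝓑^{(1)} for all n ≥ 1. (ii) If there exists q ≥ 1 such that 𝓑^{(n)} = Mat_a(ℂ) for all n ≥ q, then 𝓑^{(n)} = Mat_a(ℂ) for all n ≥ 1. -/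
lemma cocycle_split (a : ℕ) (lam : ℝ)
    (B : ℝ → Matrix (Fin a) (Fin a) ℂ)
    (Bn : ℕ → ℝ → Matrix (Fin a) (Fin a) ℂ)
    (hBn : ∀ m k, Bn m k = ((List.range m).map (fun i => B (lam ^ i * k))).prod)
    (m t : ℕ) (k : ℝ) :
    Bn (m * t) k = ((List.range t).map (fun j => Bn m (lam ^ (m * j) * k))).prod := by
  induction t with
  | zero => simp [hBn]
  | succ t ih =>
      rw [Nat.mul_succ, hBn, List.range_add, List.map_append, List.prod_append,
        List.range_succ, List.map_append, List.prod_append, ← hBn, ih]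
      congr 1
      simp only [List.map_cons, List.map_nil, List.prod_cons, List.prod_nil, mul_one, hBn, List.map_map]
      congr 1
      exact List.map_congr_left fun i _ => by
        show B (lam ^ (m * t + i) * k) = B (lam ^ i * (lam ^ (m * t) * k))
        rw [pow_add]; ring_nf

/-- **Lemma 3.5.** For the cocycle `B^{(m)}(k) = B(k) B(λk) ⋯ B(λ^{m-1}k)` and the
ℂ-algebra `𝓑^{(m)}` generated by `{B^{(m)}(k) : k ∈ ℝ}`: (i) if `m ∣ n` then
`𝓑^{(n)} ⊆ 𝓑^{(m)}`, in particular `𝓑^{(n)} ⊆ 𝓑^{(1)}`; (ii) if `𝓑^{(n)}` is the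
full matrix algebra for all `n ≥ q`, then it is so for all `n ≥ 1`. -/
theorem stmt_2 (a : ℕ) (ha : 1 ≤ a) (lam : ℝ) (hlam : 1 < lam)
    (B : ℝ → Matrix (Fin a) (Fin a) ℂ)
    (Bn : ℕ → ℝ → Matrix (Fin a) (Fin a) ℂ)
    (hBn : ∀ m k, Bn m k = ((List.range m).map (fun i => B (lam ^ i * k))).prod)
    (𝓑 : ℕ → Subalgebra ℂ (Matrix (Fin a) (Fin a) ℂ))
    (h𝓑 : ∀ m, 𝓑 m = Algebra.adjoin ℂ (Set.range (Bn m))) :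
    (∀ m n, 1 ≤ m → 1 ≤ n → m ∣ n → 𝓑 n ≤ 𝓑 m) ∧
    (∀ n, 1 ≤ n → 𝓑 n ≤ 𝓑 1) ∧
    ((∃ q, 1 ≤ q ∧ ∀ n, q ≤ n → 𝓑 n = ⊤) → ∀ n, 1 ≤ n → 𝓑 n = ⊤) := by
  have key : ∀ m n, m ∣ n → 𝓑 n ≤ 𝓑 m := by
    intro m n hmn
    obtain ⟨t, rfl⟩ := hmn
    rw [h𝓑, h𝓑]
    apply Algebra.adjoin_le
    rintro x ⟨k, rfl⟩
    rw [cocycle_split a lam B Bn hBn m t k]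
    apply Subalgebra.list_prod_mem
    intro x hx
    simp only [List.mem_map, List.mem_range] at hx
    obtain ⟨j, -, rfl⟩ := hx
    exact Algebra.subset_adjoin ⟨lam ^ (m * j) * k, rfl⟩
  refine ⟨fun m n _ _ h => key m n h, fun n _ => key 1 n (one_dvd n), ?_⟩
  rintro ⟨q, hq, hfull⟩ n hn
  have h1 : 𝓑 (n * q) ≤ 𝓑 n := key n (n * q) ⟨q, rfl⟩
  have h2 : 𝓑 (n * q) = ⊤ := hfull _ (Nat.le_mul_of_pos_left q hn)
  exact top_le_iff.mp (h2 ▸ h1)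
end

section
/- Let a ≥ 1, let λ > 1 be a real number, and for 1 ≤ i,j ≤ a let T_{ij} ⊂ ℝ be finite sets. Let Δ ⊂ ℝ be a locally finite set with 0 ∈ Δ, and for each pair (i,j) let Δ_{ij} ⊆ Δ. Then the set of all families ν = (ν_{ij})_{1 ≤ i,j ≤ a} of functions ν_{ij} : ℝ → ℝ with support contained in Δ_{ij} that satisfy, for all 1 ≤ m,n ≤ a and all z ∈ ℝ, the renormalisation equations ν_{mn}(z) = (1/λ) ∑_{i,j=1}^{a} ∑_{x ∈ T_{mi}} ∑_{y ∈ T_{nj}} ν_{ij}((z+x−y)/λ), is a finite-dimensional real vector space under pointwise addition and scalar multiplication. -/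
/-- **Theorem 3.13 (finite-dimensionality).** The space of families
`ν = (ν_{ij})` of real-valued functions with supports in prescribed subsets
`Δ_{ij}` of a locally finite set `Δ ∋ 0` satisfying the renormalisation
equations
`ν_{mn}(z) = (1/λ) ∑_{i,j} ∑_{x ∈ T_{mi}} ∑_{y ∈ T_{nj}} ν_{ij}((z+x-y)/λ)`
is a finite-dimensional real vector space. -/
theorem stmt_3 (a : ℕ) (ha : 1 ≤ a) (lam : ℝ) (hlam : 1 < lam)
    (T : Fin a → Fin a → Finset ℝ)
    (Δ : Set ℝ) (hΔ : ∀ K : Set ℝ, IsCompact K → (Δ ∩ K).Finite) (h0 : (0 : ℝ) ∈ Δ)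
    (Δij : Fin a → Fin a → Set ℝ) (hΔij : ∀ i j, Δij i j ⊆ Δ)
    (V : Submodule ℝ (Fin a → Fin a → ℝ → ℝ))
    (hV : ∀ ν : Fin a → Fin a → ℝ → ℝ, ν ∈ V ↔
      ((∀ i j, Function.support (ν i j) ⊆ Δij i j) ∧
        ∀ m n : Fin a, ∀ z : ℝ, ν m n z =
          (1 / lam) * ∑ i, ∑ j, ∑ x ∈ T m i, ∑ y ∈ T n j, ν i j ((z + x - y) / lam))) :
    FiniteDimensional ℝ V := by
  classical
  -- A bound M on all displacement values
  set F : Finset ℝ := Finset.univ.biUnion (fun p : Fin a × Fin a => (T p.1 p.2).image abs)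
    with hF
  set M : ℝ := (insert (0:ℝ) F).max' ⟨0, Finset.mem_insert_self 0 F⟩ with hM
  have hM0 : (0:ℝ) ≤ M := Finset.le_max' _ _ (Finset.mem_insert_self 0 F)
  have hMT : ∀ m i : Fin a, ∀ x ∈ T m i, |x| ≤ M := by
    intro m i x hx
    refine Finset.le_max' _ _ (Finset.mem_insert_of_mem ?_)
    exact Finset.mem_biUnion.2 ⟨(m, i), Finset.mem_univ _, Finset.mem_image_of_mem _ hx⟩
  have hlam0 : (0:ℝ) < lam := lt_trans one_pos hlam
  have hlam1 : (0:ℝ) < lam - 1 := by linarith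
  set R : ℝ := 2 * M / (lam - 1) with hRdef
  have hRmul : R * (lam - 1) = 2 * M := div_mul_cancel₀ _ (ne_of_gt hlam1)
  set S : Set ℝ := Δ ∩ Set.Icc (-R) R with hSdef
  have hSfin : S.Finite := hΔ _ isCompact_Icc
  haveI : Finite ↥S := hSfin.to_subtype
  -- the restriction linear map
  let f : (Fin a → Fin a → ℝ → ℝ) →ₗ[ℝ] (Fin a → Fin a → ↥S → ℝ) :=
    { toFun := fun ν m n p => ν m n (p : ℝ)
      map_add' := fun _ _ => rfl
      map_smul' := fun _ _ => rfl }
  have hinj : Function.Injective (f.comp V.subtype) := by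
    rw [← LinearMap.ker_eq_bot, LinearMap.ker_eq_bot']
    rintro ⟨ν, hν⟩ h0'
    obtain ⟨hsupp, heq⟩ := (hV ν).1 hν
    have hz0 : ∀ m n : Fin a, ∀ p : ↥S, ν m n (p : ℝ) = 0 := by
      intro m n p
      exact congrFun (congrFun (congrFun h0' m) n) p
    refine Subtype.ext ?_
    show ν = 0
    by_contra hne
    have hex : ∃ z : ℝ, ∃ m n : Fin a, ν m n z ≠ 0 := by
      by_contra hc
      push_neg at hc
      exact hne (funext fun m => funext fun n => funext fun z => hc z m n)
    obtain ⟨z₀, m₀, n₀, hz₀⟩ := hex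
    set Z : Set ℝ := {r : ℝ | ∃ m n : Fin a, ν m n r ≠ 0} with hZdef
    have hZΔ : Z ⊆ Δ := by
      rintro r ⟨m, n, h⟩
      exact hΔij m n (hsupp m n (Function.mem_support.2 h))
    have hWfin : (Z ∩ Set.Icc (-|z₀|) |z₀|).Finite :=
      (hΔ _ isCompact_Icc).subset (Set.inter_subset_inter_left _ hZΔ)
    have hz₀W : z₀ ∈ Z ∩ Set.Icc (-|z₀|) |z₀| :=
      ⟨⟨m₀, n₀, hz₀⟩, ⟨neg_abs_le z₀, le_abs_self z₀⟩⟩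
    obtain ⟨z, hzW, hzmin⟩ := Set.exists_min_image _ abs hWfin ⟨z₀, hz₀W⟩
    have hglob : ∀ w ∈ Z, |z| ≤ |w| := by
      intro w hw
      by_cases h : |w| ≤ |z₀|
      · exact hzmin w ⟨hw, (abs_le.1 h).1, (abs_le.1 h).2⟩
      · push_neg at h
        exact le_trans (hzmin z₀ hz₀W) h.le
    obtain ⟨m, n, hmn⟩ := hzW.1
    have hzΔ : z ∈ Δ := hZΔ hzW.1
    have hzR : R < |z| := by
      by_contra h
      push_neg at h
      have hzS : z ∈ S := ⟨hzΔ, (abs_le.1 h).1, (abs_le.1 h).2⟩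
      exact hmn (hz0 m n ⟨z, hzS⟩)
    have hRz : 2 * M < |z| * (lam - 1) := by
      have := mul_lt_mul_of_pos_right hzR hlam1
      rwa [hRmul] at this
    have hterm : ∀ i j : Fin a, ∀ x ∈ T m i, ∀ y ∈ T n j,
        ν i j ((z + x - y) / lam) = 0 := by
      intro i j x hx y hy
      by_contra hw
      have hwZ : (z + x - y) / lam ∈ Z := ⟨i, j, hw⟩
      have h1 : |z| ≤ |(z + x - y) / lam| := hglob _ hwZ
      have e1 : |z + x - y| ≤ |z| + |x| + |y| := by
        calc |z + x - y| = |(z + x) + (-y)| := by ring_nf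
          _ ≤ |z + x| + |(-y)| := abs_add_le _ _
          _ = |z + x| + |y| := by rw [abs_neg]
          _ ≤ |z| + |x| + |y| := by linarith [abs_add_le z x]
      have h2 : |(z + x - y) / lam| * lam ≤ |z| + 2 * M := by
        rw [abs_div, abs_of_pos hlam0, div_mul_cancel₀ _ (ne_of_gt hlam0)]
        have hxM := hMT m i x hx
        have hyM := hMT n j y hy
        linarith
      nlinarith [mul_le_mul_of_nonneg_right h1 (le_of_lt hlam0)]
    have hsum : (∑ i, ∑ j, ∑ x ∈ T m i, ∑ y ∈ T n j, ν i j ((z + x - y) / lam)) = 0 := by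
      refine Finset.sum_eq_zero fun i _ => Finset.sum_eq_zero fun j _ =>
        Finset.sum_eq_zero fun x hx => Finset.sum_eq_zero fun y hy => hterm i j x hx y hy
    exact hmn (by rw [heq m n z, hsum, mul_zero])
  exact FiniteDimensional.of_injective (f.comp V.subtype) hinj
end

section
/- Let a ≥ 1, let λ > 1 be a real number, let S ⊂ ℝ be finite, let D_x ∈ Mat_a(ℂ) for x ∈ S, let B(k) = ∑_{x∈S} e^{2πikx} D_x, and set B^{(n)}(k) = B(k)·B(λk)···B(λ^{n−1}k). Assume that det B(k₀) ≠ 0 for some k₀ ∈ ℝ, and that there exists ε > 0 such that for Lebesgue-almost every k ∈ ℝ one has limsup_{n→∞} (1/n) log‖B^{(n)}(k)‖ ≤ (1/2) log λ − ε. Let H : ℝ → Mat_a(ℂ) be a measurable matrix-valued function such that for almost every k ∈ ℝ the matrix H(k) is Hermitian and positive semidefinite and satisfies H(k) = λ^{−1} B(k) H(λk) B(k)*, and such that k ↦ trace H(k) is locally Lebesgue integrable with ∫_{−T}^{T} trace H(k) dk ≤ C·T for some constant C and all T ≥ 1. Then H(k) = 0 for almost every k ∈ ℝ. -/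
/-!
Iterating the relation gives `H k = λ⁻ⁿ B⁽ⁿ⁾(k) H(λⁿ k) B⁽ⁿ⁾(k)*`, hence
`tr H(k) ≤ a² λ⁻ⁿ ‖B⁽ⁿ⁾(k)‖² tr H(λⁿ k) ≤ a² e^{-nε} tr H(λⁿ k)` for all large `n`, by the Lyapunov
bound. After the substitution `k ↦ λⁿ k`, the linear growth of `∫_{-T}^{T} tr H` makes
`∫_{-T}^{T} tr H(λⁿ k) dk ≤ C T` uniformly in `n`, so Fatou's lemma gives `∫_{-T}^{T} tr H = 0`.
A positive semidefinite matrix with zero trace vanishes.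
-/

open MeasureTheory
open scoped ComplexOrder

attribute [local instance] Matrix.normedAddCommGroup

open Filter Set Topology
open scoped Matrix ENNReal

attribute [local instance] Matrix.normSMulClass

-- Without the bound `u n ≤ R ^ n` the sequence need not be bounded above, and `limsup` would be
-- a junk value.
theorem Real.eventually_le_exp_mul_of_limsup_lt {u : ℕ → ℝ} {R r : ℝ} (hR : 1 ≤ R)
    (hu0 : ∀ n, 0 ≤ u n) (hu : ∀ n, u n ≤ R ^ n)
    (hlim : limsup (fun n : ℕ => (1 / (n : ℝ)) * Real.log (u n)) atTop < r) :
    ∀ᶠ n : ℕ in atTop, u n ≤ Real.exp (n * r) := by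
  have hbdd : IsBoundedUnder (· ≤ ·) atTop fun n : ℕ => (1 / (n : ℝ)) * Real.log (u n) := by
    refine isBoundedUnder_of ⟨Real.log R, fun n => ?_⟩
    rcases n.eq_zero_or_pos with rfl | hn
    · simp [Real.log_nonneg hR]
    rcases (hu0 n).eq_or_lt with h0 | hpos
    · simp [← h0, Real.log_nonneg hR]
    rw [one_div, inv_mul_le_iff₀ (by positivity), ← Real.log_pow]
    exact Real.log_le_log hpos (hu n)
  filter_upwards [eventually_lt_of_limsup_lt hlim hbdd, eventually_ge_atTop 1] with n hn hn1
  rw [one_div, inv_mul_lt_iff₀ (by positivity)] at hn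
  exact (Real.le_exp_log _).trans (Real.exp_le_exp.mpr hn.le)

namespace Matrix

variable {l m n : Type*} [Fintype m] [Fintype n]

theorem norm_mul_le_card_mul [Fintype l] {α : Type*} [NormedRing α] (A : Matrix l m α)
    (B : Matrix m n α) :
    ‖A * B‖ ≤ Fintype.card m * ‖A‖ * ‖B‖ := by
  refine (norm_le_iff (by positivity)).mpr fun i j => ?_
  calc ‖(A * B) i j‖ ≤ ∑ k, ‖A i k‖ * ‖B k j‖ := by
        rw [mul_apply]; exact norm_sum_le_of_le _ fun k _ => norm_mul_le _ _
    _ ≤ ∑ _k : m, ‖A‖ * ‖B‖ := by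
        gcongr <;> exact norm_entry_le_entrywise_sup_norm _
    _ = Fintype.card m * ‖A‖ * ‖B‖ := by simp [mul_assoc]

theorem norm_one_le {α : Type*} [NormedRing α] [NormOneClass α] [DecidableEq m] :
    ‖(1 : Matrix m m α)‖ ≤ 1 :=
  (norm_le_iff zero_le_one).mpr fun i j => by
    rcases eq_or_ne i j with rfl | h <;> simp [*]

theorem norm_prod_map_range_le {α : Type*} [NormedRing α] [NormOneClass α] [DecidableEq m]
    {A : ℕ → Matrix m m α} {R : ℝ} (hA : ∀ i, Fintype.card m * ‖A i‖ ≤ R) (k : ℕ) :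
    ‖((List.range k).map A).prod‖ ≤ R ^ k := by
  induction k with
  | zero => simpa using norm_one_le
  | succ k ih =>
    have hR : 0 ≤ R := (by positivity : (0:ℝ) ≤ Fintype.card m * ‖A 0‖).trans (hA 0)
    rw [List.prod_range_succ, pow_succ]
    calc _ ≤ Fintype.card m * ‖((List.range k).map A).prod‖ * ‖A k‖ := norm_mul_le_card_mul _ _
      _ = ‖((List.range k).map A).prod‖ * (Fintype.card m * ‖A k‖) := by ring
      _ ≤ R ^ k * R := by gcongr; exact hA k

theorem re_trace_conjTranspose_mul_self (Y : Matrix m n ℂ) :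
    (Yᴴ * Y).trace.re = ∑ j, ∑ i, ‖Y i j‖ ^ 2 := by
  simp only [trace, diag, mul_apply, conjTranspose_apply, Complex.re_sum, Complex.star_def,
    Complex.conj_mul', ← Complex.ofReal_pow, Complex.ofReal_re]

theorem sq_norm_mul_apply_le (X : Matrix l m ℂ) (B : Matrix m n ℂ) (i : l) (j : n) :
    ‖(X * B) i j‖ ^ 2 ≤ Fintype.card m * ‖B‖ ^ 2 * ∑ k, ‖X i k‖ ^ 2 := by
  have hentry : ‖(X * B) i j‖ ≤ ‖B‖ * ∑ k, ‖X i k‖ := by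
    rw [mul_apply, Finset.mul_sum]
    refine norm_sum_le_of_le _ fun k _ => ?_
    rw [norm_mul, mul_comm]
    gcongr
    exact norm_entry_le_entrywise_sup_norm B
  calc ‖(X * B) i j‖ ^ 2 ≤ ‖B‖ ^ 2 * (∑ k, ‖X i k‖) ^ 2 := by
        rw [← mul_pow]; gcongr
    _ ≤ ‖B‖ ^ 2 * (Fintype.card m * ∑ k, ‖X i k‖ ^ 2) := by
        gcongr; simpa using sq_sum_le_card_mul_sum_sq (s := Finset.univ) (f := fun k => ‖X i k‖)
    _ = _ := by ring

theorem PosSemidef.re_trace_nonneg {M : Matrix n n ℂ} (hM : M.PosSemidef) : 0 ≤ M.trace.re :=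
  (Complex.nonneg_iff.mp hM.trace_nonneg).1

theorem PosSemidef.re_trace_mul_mul_conjTranspose_le {M : Matrix n n ℂ} (hM : M.PosSemidef)
    (A : Matrix m n ℂ) :
    (A * M * Aᴴ).trace.re ≤ Fintype.card m * Fintype.card n * ‖A‖ ^ 2 * M.trace.re := by
  classical
  obtain ⟨X, rfl⟩ : ∃ X : Matrix n n ℂ, M = Xᴴ * X := by
    open scoped MatrixOrder in
    exact CStarAlgebra.nonneg_iff_eq_star_mul_self.mp hM.nonneg
  have hconj : A * (Xᴴ * X) * Aᴴ = (X * Aᴴ)ᴴ * (X * Aᴴ) := by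
    simp [conjTranspose_mul, Matrix.mul_assoc]
  rw [hconj, re_trace_conjTranspose_mul_self, re_trace_conjTranspose_mul_self, Finset.sum_comm]
  calc ∑ i, ∑ j, ‖(X * Aᴴ) i j‖ ^ 2
      ≤ ∑ i, ∑ _j : m, Fintype.card n * ‖A‖ ^ 2 * ∑ k, ‖X i k‖ ^ 2 := by
        gcongr with i _ j _
        simpa [norm_conjTranspose] using sq_norm_mul_apply_le X Aᴴ i j
    _ = _ := by
        simp only [Finset.sum_const, Finset.card_univ, nsmul_eq_mul, ← Finset.mul_sum]
        rw [Finset.sum_comm]; ring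

theorem eq_inv_pow_smul_prod_mul_mul_conjTranspose {𝕜 : Type*} [Field 𝕜] [StarRing 𝕜]
    [DecidableEq m] {M A : ℕ → Matrix m m 𝕜} {c : 𝕜}
    (h : ∀ i, M i = c⁻¹ • (A i * M (i + 1) * (A i)ᴴ)) (k : ℕ) :
    M 0 = (c ^ k)⁻¹ • (((List.range k).map A).prod * M k * ((List.range k).map A).prodᴴ) := by
  induction k with
  | zero => simp
  | succ k ih =>
    rw [ih, h k, List.prod_range_succ, conjTranspose_mul, Matrix.mul_smul, Matrix.smul_mul,
      smul_smul, pow_succ, mul_inv]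
    simp only [Matrix.mul_assoc]

theorem norm_sum_exp_smul_le (S : Finset ℝ) (D : ℝ → Matrix m n ℂ) (k : ℝ) :
    ‖∑ x ∈ S, Complex.exp (2 * (Real.pi : ℂ) * Complex.I * (k : ℂ) * (x : ℂ)) • D x‖
      ≤ ∑ x ∈ S, ‖D x‖ := by
  refine norm_sum_le_of_le _ fun x _ => ?_
  have harg : 2 * (Real.pi : ℂ) * Complex.I * (k : ℂ) * (x : ℂ)
      = ((2 * Real.pi * k * x : ℝ) : ℂ) * Complex.I := by push_cast; ring
  rw [norm_smul, harg, Complex.norm_exp_ofReal_mul_I, one_mul]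

theorem eventually_re_trace_le_exp_mul [DecidableEq m]
    {M A : ℕ → Matrix m m ℂ} {lam ε R : ℝ} (hlam : 0 < lam) (hR : 1 ≤ R)
    (hM : ∀ i, (M i).PosSemidef) (h : ∀ i, M i = (lam : ℂ)⁻¹ • (A i * M (i + 1) * (A i)ᴴ))
    (hA : ∀ n, ‖((List.range n).map A).prod‖ ≤ R ^ n)
    (hlim : limsup (fun n : ℕ => (1 / (n : ℝ)) * Real.log ‖((List.range n).map A).prod‖) atTop
      ≤ Real.log lam / 2 - ε) (hε : 0 < ε) :
    ∀ᶠ n : ℕ in atTop,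
      (M 0).trace.re ≤ Fintype.card m ^ 2 * Real.exp (-(n * ε)) * (M n).trace.re := by
  have hlim' := hlim.trans_lt (by linarith : Real.log lam / 2 - ε < Real.log lam / 2 - ε / 2)
  filter_upwards [Real.eventually_le_exp_mul_of_limsup_lt hR (fun _ => norm_nonneg _) hA hlim']
    with n hn
  set P := ((List.range n).map A).prod
  have hdecay : (lam ^ n)⁻¹ * ‖P‖ ^ 2 ≤ Real.exp (-(n * ε)) := by
    have hexp : Real.exp (n * (Real.log lam / 2 - ε / 2)) ^ 2 = lam ^ n * Real.exp (-(n * ε)) := by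
      rw [← Real.exp_nat_mul, ← Real.rpow_natCast, Real.rpow_def_of_pos hlam, ← Real.exp_add]
      congr 1
      push_cast
      ring
    rw [inv_mul_le_iff₀ (pow_pos hlam n), ← hexp]
    gcongr
  have htrace0 : 0 ≤ (M n).trace.re := (hM n).re_trace_nonneg
  calc (M 0).trace.re = (lam ^ n)⁻¹ * (P * M n * Pᴴ).trace.re := by
        rw [eq_inv_pow_smul_prod_mul_mul_conjTranspose h n, trace_smul, ← Complex.ofReal_pow,
          ← Complex.ofReal_inv, smul_eq_mul, Complex.re_ofReal_mul]
    _ ≤ (lam ^ n)⁻¹ * (Fintype.card m * Fintype.card m * ‖P‖ ^ 2 * (M n).trace.re) := by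
        gcongr
        exact (hM n).re_trace_mul_mul_conjTranspose_le P
    _ = Fintype.card m ^ 2 * ((lam ^ n)⁻¹ * ‖P‖ ^ 2) * (M n).trace.re := by ring
    _ ≤ Fintype.card m ^ 2 * Real.exp (-(n * ε)) * (M n).trace.re := by gcongr

end Matrix

theorem setLIntegral_Icc_comp_mul_left {f : ℝ → ℝ≥0∞} (hf : Measurable f) {c : ℝ} (hc : 0 < c)
    (T : ℝ) :
    ∫⁻ k in Icc (-T) T, f (c * k) = ENNReal.ofReal c⁻¹ * ∫⁻ k in Icc (-(c * T)) (c * T), f k := by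
  have hpre : (c * ·) ⁻¹' Icc (-(c * T)) (c * T) = Icc (-T) T := by
    ext x
    simp only [mem_preimage, mem_Icc, ← mul_neg, mul_le_mul_iff_right₀ hc]
  have hmap : Measure.map (c * ·) (volume.restrict (Icc (-T) T))
      = ENNReal.ofReal c⁻¹ • volume.restrict (Icc (-(c * T)) (c * T)) := by
    rw [← hpre, ← Measure.restrict_map (measurable_const_mul c) measurableSet_Icc,
      Real.map_volume_mul_left hc.ne', Measure.restrict_smul, abs_of_pos (inv_pos.mpr hc)]
  rw [← lintegral_map hf (measurable_const_mul c), hmap, lintegral_smul_measure, smul_eq_mul]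

theorem ae_of_forall_ae_restrict_Icc {p : ℝ → Prop}
    (h : ∀ T, 1 ≤ T → ∀ᵐ k ∂volume.restrict (Icc (-T) T), p k) : ∀ᵐ k, p k := by
  have hcover : ⋃ m : ℕ, Icc (-((m : ℝ) + 1)) (m + 1) = univ := by
    refine eq_univ_of_forall fun k => mem_iUnion.mpr ⟨⌈|k|⌉₊, abs_le.mp ?_⟩
    linarith [Nat.le_ceil |k|]
  have hall := (ae_restrict_iUnion_iff (fun m : ℕ => Icc (-((m : ℝ) + 1)) (m + 1)) p).mpr
    fun m => h _ (by linarith [m.cast_nonneg (α := ℝ)])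
  rwa [hcover, Measure.restrict_univ] at hall

section ScalingDecay

variable {φ : ℝ → ℝ} {C : ℝ}

theorem setLIntegral_Icc_comp_mul_le (hφ : Measurable φ) (hφ0 : ∀ᵐ k, 0 ≤ φ k)
    (hloc : ∀ T, IntegrableOn φ (Icc (-T) T))
    (hbound : ∀ T, 1 ≤ T → ∫ k in Icc (-T) T, φ k ≤ C * T) {s T : ℝ} (hs : 1 ≤ s) (hT : 1 ≤ T) :
    ∫⁻ k in Icc (-T) T, ENNReal.ofReal (φ (s * k)) ≤ ENNReal.ofReal (C * T) := by
  have hs0 : 0 < s := one_pos.trans_le hs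
  rw [setLIntegral_Icc_comp_mul_left hφ.ennreal_ofReal hs0,
    ← ofReal_integral_eq_lintegral_ofReal (hloc _) (ae_restrict_of_ae hφ0),
    ← ENNReal.ofReal_mul (by positivity)]
  refine ENNReal.ofReal_le_ofReal ?_
  calc s⁻¹ * ∫ k in Icc (-(s * T)) (s * T), φ k ≤ s⁻¹ * (C * (s * T)) := by
        gcongr; exact hbound _ (by nlinarith)
    _ = C * T := by field_simp

theorem ae_eq_zero_of_le_mul_comp_mul (hφ : Measurable φ) (hφ0 : ∀ᵐ k, 0 ≤ φ k)
    (hloc : ∀ T, IntegrableOn φ (Icc (-T) T))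
    (hbound : ∀ T, 1 ≤ T → ∫ k in Icc (-T) T, φ k ≤ C * T) {c s : ℕ → ℝ}
    (hc0 : ∀ n, 0 ≤ c n) (hc : Tendsto c atTop (𝓝 0)) (hs : ∀ n, 1 ≤ s n)
    (hle : ∀ᵐ k, ∀ᶠ n in atTop, φ k ≤ c n * φ (s n * k)) : ∀ᵐ k, φ k = 0 := by
  refine ae_of_forall_ae_restrict_Icc fun T hT => ?_
  have hfatou : ∫⁻ k in Icc (-T) T, ENNReal.ofReal (φ k)
      ≤ liminf (fun n => ENNReal.ofReal (c n) * ENNReal.ofReal (C * T)) atTop :=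
    calc ∫⁻ k in Icc (-T) T, ENNReal.ofReal (φ k)
        ≤ ∫⁻ k in Icc (-T) T, liminf (fun n => ENNReal.ofReal (c n * φ (s n * k))) atTop := by
          refine lintegral_mono_ae (ae_restrict_of_ae ?_)
          filter_upwards [hle] with k hk
          exact le_liminf_of_le (by isBoundedDefault) (hk.mono fun n => ENNReal.ofReal_le_ofReal)
      _ ≤ liminf (fun n => ∫⁻ k in Icc (-T) T, ENNReal.ofReal (c n * φ (s n * k))) atTop :=
          lintegral_liminf_le fun n => by fun_prop
      _ ≤ liminf (fun n => ENNReal.ofReal (c n) * ENNReal.ofReal (C * T)) atTop := by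
          refine liminf_le_liminf (Eventually.of_forall fun n => ?_)
          simp only [ENNReal.ofReal_mul (hc0 n)]
          rw [lintegral_const_mul _
            (by fun_prop : Measurable fun k => ENNReal.ofReal (φ (s n * k)))]
          gcongr
          exact setLIntegral_Icc_comp_mul_le hφ hφ0 hloc hbound (hs n) hT
  have hlim : Tendsto (fun n => ENNReal.ofReal (c n) * ENNReal.ofReal (C * T)) atTop (𝓝 0) := by
    simpa using ENNReal.Tendsto.mul_const (ENNReal.tendsto_ofReal hc) (Or.inr ENNReal.ofReal_ne_top)
  rw [hlim.liminf_eq, nonpos_iff_eq_zero, lintegral_eq_zero_iff hφ.ennreal_ofReal] at hfatou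
  filter_upwards [hfatou, ae_restrict_of_ae hφ0] with k hk hk0
  exact le_antisymm (ENNReal.ofReal_eq_zero.mp hk) hk0

end ScalingDecay

theorem stmt_5_general (a : ℕ) (lam : ℝ) (hlam : 1 < lam)
    (S : Finset ℝ) (D : ℝ → Matrix (Fin a) (Fin a) ℂ)
    (B : ℝ → Matrix (Fin a) (Fin a) ℂ)
    (hB : ∀ k : ℝ, B k =
      ∑ x ∈ S, Complex.exp (2 * (Real.pi : ℂ) * Complex.I * (k : ℂ) * (x : ℂ)) • D x)
    (Bn : ℕ → ℝ → Matrix (Fin a) (Fin a) ℂ)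
    (hBn : ∀ n k, Bn n k = ((List.range n).map (fun i => B (lam ^ i * k))).prod)
    (ε : ℝ) (hε : 0 < ε)
    (hLyap : ∀ᵐ k : ℝ ∂volume,
      Filter.limsup (fun n : ℕ => (1 / (n : ℝ)) * Real.log ‖Bn n k‖) Filter.atTop
        ≤ Real.log lam / 2 - ε)
    (H : ℝ → Matrix (Fin a) (Fin a) ℂ)
    (hmeas : ∀ i j, Measurable fun k => H k i j)
    (hHp : ∀ᵐ k : ℝ ∂volume, (H k).PosSemidef ∧
      H k = ((lam : ℂ))⁻¹ • (B k * H (lam * k) * (B k).conjTranspose))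
    (C : ℝ)
    (hloc : ∀ T : ℝ, IntegrableOn (fun k => ((H k).trace).re) (Set.Icc (-T) T) volume)
    (hbound : ∀ T : ℝ, 1 ≤ T →
      ∫ k in Set.Icc (-T) T, ((H k).trace).re ∂volume ≤ C * T) :
    ∀ᵐ k : ℝ ∂volume, H k = 0 := by
  have hlam0 : 0 < lam := one_pos.trans hlam
  set R := max (a * ∑ x ∈ S, ‖D x‖) 1
  have hBn_le : ∀ n k, ‖Bn n k‖ ≤ R ^ n := fun n k => by
    rw [hBn]
    refine Matrix.norm_prod_map_range_le (fun i => le_max_of_le_left ?_) n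
    rw [hB, Fintype.card_fin]
    gcongr
    exact Matrix.norm_sum_exp_smul_le S D _
  have horbit : ∀ᵐ k, ∀ n : ℕ, (H (lam ^ n * k)).PosSemidef ∧ H (lam ^ n * k) =
      (lam : ℂ)⁻¹ • (B (lam ^ n * k) * H (lam ^ (n + 1) * k) * (B (lam ^ n * k))ᴴ) :=
    ae_all_iff.mpr fun n => by
      simpa only [smul_eq_mul, ← mul_assoc, ← pow_succ'] using
        (Measure.quasiMeasurePreserving_smul volume (pow_ne_zero n hlam0.ne')).ae hHp
  have hdecay : ∀ᵐ k, ∀ᶠ n : ℕ in atTop, (H k).trace.re ≤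
      a ^ 2 * Real.exp (-(n * ε)) * (H (lam ^ n * k)).trace.re := by
    filter_upwards [horbit, hLyap] with k hk hkLyap
    simp only [hBn] at hkLyap
    simpa using Matrix.eventually_re_trace_le_exp_mul hlam0 (le_max_right _ _) (fun n => (hk n).1)
      (fun n => (hk n).2) (fun n => hBn n k ▸ hBn_le n k) hkLyap hε
  have htrace : ∀ᵐ k, (H k).trace.re = 0 := by
    refine ae_eq_zero_of_le_mul_comp_mul ?_ ?_ hloc hbound (fun n => by positivity) ?_
      (fun n => one_le_pow₀ hlam.le) hdecay
    · exact Complex.measurable_re.comp (Finset.measurable_sum _ fun i _ => hmeas i i)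
    · exact hHp.mono fun k hk => hk.1.re_trace_nonneg
    · simpa using ((Real.tendsto_exp_neg_atTop_nhds_zero.comp
        (tendsto_natCast_atTop_atTop.atTop_mul_const hε)).const_mul ((a : ℝ) ^ 2))
  filter_upwards [htrace, hHp] with k hk0 hk
  exact hk.1.trace_eq_zero_iff.mp (Complex.ext hk0 (Complex.nonneg_iff.mp hk.1.trace_nonneg).2.symm)

/-- **Theorem 3.24 (analytic core).** Suppose the Fourier matrix
`B(k) = ∑_{x ∈ S} e^{2πikx} D_x` has `det B(k₀) ≠ 0` for some `k₀`, and the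
maximal Lyapunov exponent of the cocycle `B^{(n)}(k) = B(k)B(λk)⋯B(λ^{n-1}k)`
satisfies `χ^B(k) ≤ (1/2) log λ − ε` for a.e. `k`. If `H` is a measurable
family of Hermitian positive semidefinite matrices with
`H(k) = λ⁻¹ B(k) H(λk) B(k)*` a.e. and locally integrable, linearly bounded
trace, then `H(k) = 0` for almost every `k`. -/
theorem stmt_5 (a : ℕ) (ha : 1 ≤ a) (lam : ℝ) (hlam : 1 < lam)
    (S : Finset ℝ) (D : ℝ → Matrix (Fin a) (Fin a) ℂ)
    (B : ℝ → Matrix (Fin a) (Fin a) ℂ)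
    (hB : ∀ k : ℝ, B k =
      ∑ x ∈ S, Complex.exp (2 * (Real.pi : ℂ) * Complex.I * (k : ℂ) * (x : ℂ)) • D x)
    (Bn : ℕ → ℝ → Matrix (Fin a) (Fin a) ℂ)
    (hBn : ∀ n k, Bn n k = ((List.range n).map (fun i => B (lam ^ i * k))).prod)
    (k₀ : ℝ) (hdet : (B k₀).det ≠ 0)
    (ε : ℝ) (hε : 0 < ε)
    (hLyap : ∀ᵐ k : ℝ ∂volume,
      Filter.limsup (fun n : ℕ => (1 / (n : ℝ)) * Real.log ‖Bn n k‖) Filter.atTop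
        ≤ Real.log lam / 2 - ε)
    (H : ℝ → Matrix (Fin a) (Fin a) ℂ)
    (hmeas : ∀ i j, Measurable fun k => H k i j)
    (hHp : ∀ᵐ k : ℝ ∂volume, (H k).PosSemidef ∧
      H k = ((lam : ℂ))⁻¹ • (B k * H (lam * k) * (B k).conjTranspose))
    (C : ℝ)
    (hloc : ∀ T : ℝ, IntegrableOn (fun k => ((H k).trace).re) (Set.Icc (-T) T) volume)
    (hbound : ∀ T : ℝ, 1 ≤ T →
      ∫ k in Set.Icc (-T) T, ((H k).trace).re ∂volume ≤ C * T) :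
    ∀ᵐ k : ℝ ∂volume, H k = 0 :=
  stmt_5_general a lam hlam S D B hB Bn hBn ε hε hLyap H hmeas hHp C hloc hbound
end

section
/- Let a, L ≥ 1 be integers, let g_0, …, g_{L−1} be permutations of {1,…,a}, and let M be the a×a nonnegative integer matrix with entries M_{ij} = card{ m : g_m(j) = i }. If M is primitive, i.e. there exists N with all entries of M^N strictly positive, then the subgroup of the symmetric group on {1,…,a} generated by g_0, …, g_{L−1} acts transitively: for all i, j ∈ {1,…,a} there exists an element σ of this subgroup with σ(j) = i. -/
/-- **Lemma 4.2.** If the substitution matrix `M` with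
`M_{ij} = card{m : g_m(j) = i}` of a bijective constant-length substitution is
primitive, then the subgroup generated by the column permutations
`g_0, …, g_{L-1}` acts transitively on the alphabet. -/
theorem stmt_9 (a L : ℕ) (ha : 1 ≤ a) (hL : 1 ≤ L)
    (g : Fin L → Equiv.Perm (Fin a))
    (M : Matrix (Fin a) (Fin a) ℕ)
    (hM : ∀ i j, M i j = (Finset.univ.filter (fun m : Fin L => g m j = i)).card)
    (hprim : ∃ N : ℕ, ∀ i j, 0 < (M ^ N) i j) :
    ∀ i j : Fin a, ∃ σ ∈ Subgroup.closure (Set.range g), σ j = i := by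
  obtain ⟨N, hN⟩ := hprim
  have key : ∀ (n : ℕ) (i j : Fin a), 0 < (M ^ n) i j →
      ∃ σ ∈ Subgroup.closure (Set.range g), σ j = i := by
    intro n
    induction n with
    | zero =>
      intro i j h
      simp only [pow_zero, Matrix.one_apply] at h
      split_ifs at h with hij
      · exact ⟨1, Subgroup.one_mem _, by simp [hij]⟩
      · exact absurd h (lt_irrefl 0)
    | succ n ih =>
      intro i j h
      rw [pow_succ', Matrix.mul_apply] at h
      obtain ⟨k, hk⟩ : ∃ k, 0 < M i k * (M ^ n) k j := by
        by_contra hc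
        push_neg at hc
        simp only [Nat.le_zero] at hc
        simp [Finset.sum_eq_zero (fun k _ => hc k)] at h
      have h1 : 0 < M i k := Nat.pos_of_ne_zero fun h0 => by simp [h0] at hk
      have h2 : 0 < (M ^ n) k j := Nat.pos_of_ne_zero fun h0 => by simp [h0] at hk
      rw [hM, Finset.card_pos] at h1
      obtain ⟨m, hm⟩ := h1
      simp only [Finset.mem_filter] at hm
      obtain ⟨τ, hτmem, hτ⟩ := ih k j h2
      refine ⟨g m * τ, Subgroup.mul_mem _ (Subgroup.subset_closure ⟨m, rfl⟩) hτmem, ?_⟩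
      simp [hτ, hm.2]
  intro i j
  exact key N i j (hN i j)
end

section
/- Let L ≥ 2 be an integer and let c_0, …, c_{L−1} be complex numbers, each of which is either zero or of modulus 1, and not all zero. Let p(t) = ∑_{m=0}^{L−1} c_m e^{2πimt}. Then t ↦ log|p(t)| is Lebesgue integrable on [0,1] and ∫_0^1 log|p(t)| dt < (1/2) log L. -/
/-!
Write `p(t) = q(e^{2πit})` with `q = ∑ c_m X^m`, so that `∫₀¹ log|p|` is the logarithmic Mahler
measure of `q`; integrability of `log|q|` on the circle holds because `q` is meromorphic.
Landau's inequality `M(q)² ≤ ∑ |c_m|²` already gives the bound when some `c_m` vanishes. When all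
`|c_m| = 1`, apply Landau to `q · (X^n + β)` with `n = deg q` and `β = -c₀ c̄ₙ / ∑ |c_m|²`: the
factor `X^n + β` has all its roots in the closed unit disc, hence Mahler measure `1`, and the
overlap of the two shifted copies of `q` in degree `n` lowers the `ℓ²` norm, yielding
`M(q)² ≤ ∑ |c_m|² - |c₀ cₙ|² / ∑ |c_m|² = L - 1/L`.
-/

open MeasureTheory Polynomial Real Set

theorem circleAverage_eq_integral_Icc {E : Type*} [NormedAddCommGroup E] [NormedSpace ℝ E]
    (f : ℂ → E) (c : ℂ) (R : ℝ) :
    circleAverage f c R = ∫ t in Icc (0 : ℝ) 1, f (circleMap c R (2 * π * t)) := by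
  rw [circleAverage_def, integral_Icc_eq_integral_Ioc,
    ← intervalIntegral.integral_of_le zero_le_one,
    intervalIntegral.integral_comp_mul_left (fun θ => f (circleMap c R θ)) two_pi_pos.ne',
    mul_zero, mul_one]

theorem CircleIntegrable.integrableOn_Icc_comp {E : Type*} [NormedAddCommGroup E] {f : ℂ → E}
    {c : ℂ} {R : ℝ} (hf : CircleIntegrable f c R) :
    IntegrableOn (fun t : ℝ => f (circleMap c R (2 * π * t))) (Icc 0 1) := by
  have := hf.comp_mul_left (c := 2 * π)
  rw [zero_div, div_self two_pi_pos.ne'] at this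
  exact (intervalIntegrable_iff_integrableOn_Icc_of_le zero_le_one).1 this

namespace Polynomial

theorem sum_sq_norm_coeff_eq_sum_range {p : ℂ[X]} {N : ℕ} (h : p.natDegree < N) :
    ∑ i ∈ p.support, ‖p.coeff i‖ ^ 2 = ∑ i ∈ Finset.range N, ‖p.coeff i‖ ^ 2 :=
  (sum_def p _).symm.trans (sum_over_range' p (f := fun _ a => ‖a‖ ^ 2) (by simp) N h)

theorem sum_sq_norm_coeff_mul_X_natDegree_add_C (p : ℂ[X]) (β : ℂ) :
    ∑ i ∈ (p * (X ^ p.natDegree + C β)).support, ‖(p * (X ^ p.natDegree + C β)).coeff i‖ ^ 2 =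
      (1 + ‖β‖ ^ 2) * ∑ i ∈ p.support, ‖p.coeff i‖ ^ 2 - ‖p.coeff 0‖ ^ 2
        - ‖β‖ ^ 2 * ‖p.leadingCoeff‖ ^ 2 + ‖p.coeff 0 + β * p.leadingCoeff‖ ^ 2 := by
  set n := p.natDegree
  set P := p * (X ^ n + C β)
  have hcoeff (i : ℕ) : P.coeff i = (if n ≤ i then p.coeff (i - n) else 0) + β * p.coeff i := by
    simp only [P, mul_add, coeff_add, coeff_mul_X_pow', coeff_mul_C, mul_comm β]
  have hdeg : P.natDegree < n + 1 + n :=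
    (natDegree_mul_le.trans_eq (by rw [natDegree_X_pow_add_C])).trans_lt (by omega)
  have low : ∑ i ∈ Finset.range n, ‖P.coeff i‖ ^ 2 =
      ‖β‖ ^ 2 * ∑ i ∈ Finset.range n, ‖p.coeff i‖ ^ 2 := by
    rw [Finset.mul_sum]
    refine Finset.sum_congr rfl fun i hi => ?_
    rw [hcoeff, if_neg (by simpa using hi), zero_add, norm_mul, mul_pow]
  have mid : P.coeff n = p.coeff 0 + β * p.coeff n := by
    rw [hcoeff, if_pos le_rfl, Nat.sub_self]
  have high : ∑ k ∈ Finset.range n, ‖P.coeff (n + 1 + k)‖ ^ 2 =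
      ∑ k ∈ Finset.range n, ‖p.coeff (k + 1)‖ ^ 2 := by
    refine Finset.sum_congr rfl fun k _ => ?_
    rw [hcoeff, if_pos (by omega), coeff_eq_zero_of_natDegree_lt (by omega : n < n + 1 + k),
      mul_zero, add_zero, show n + 1 + k - n = k + 1 by omega]
  have hS := sum_sq_norm_coeff_eq_sum_range (p := p) (Nat.lt_succ_self n)
  have hS_low := hS.trans (Finset.sum_range_succ _ n)
  have hS_high := hS.trans (Finset.sum_range_succ' _ n)
  rw [leadingCoeff, sum_sq_norm_coeff_eq_sum_range hdeg, Finset.sum_range_add,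
    Finset.sum_range_succ, low, mid, high]
  linear_combination -hS_high - ‖β‖ ^ 2 * hS_low

theorem mahlerMeasure_X_pow_add_C {n : ℕ} (hn : n ≠ 0) {β : ℂ} (hβ : ‖β‖ ≤ 1) :
    (X ^ n + C β).mahlerMeasure = 1 := by
  rw [mahlerMeasure_eq_leadingCoeff_mul_prod_roots, (monic_X_pow_add_C β hn).leadingCoeff,
    norm_one, one_mul]
  refine Multiset.prod_eq_one fun x hx => ?_
  obtain ⟨a, ha, rfl⟩ := Multiset.mem_map.1 hx
  have hroot : a ^ n = -β := by
    have := (mem_roots (X_pow_add_C_ne_zero (Nat.pos_of_ne_zero hn) β)).1 ha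
    simpa [eq_neg_iff_add_eq_zero] using this
  have : ‖a‖ ^ n ≤ 1 := by
    rw [← norm_pow, hroot, norm_neg]
    exact hβ
  exact max_eq_left ((pow_le_one_iff_of_nonneg (norm_nonneg a) hn).1 this)

theorem sq_norm_coeff_zero_add_sq_norm_leadingCoeff_le {p : ℂ[X]} (hp : 0 < p.natDegree) :
    ‖p.coeff 0‖ ^ 2 + ‖p.leadingCoeff‖ ^ 2 ≤ ∑ i ∈ p.support, ‖p.coeff i‖ ^ 2 := by
  rw [sum_sq_norm_coeff_eq_sum_range (Nat.lt_succ_self _)]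
  refine le_of_eq_of_le (Finset.sum_pair (f := fun i => ‖p.coeff i‖ ^ 2) hp.ne).symm ?_
  refine Finset.sum_le_sum_of_subset_of_nonneg ?_ fun _ _ _ => sq_nonneg _
  simp [Finset.insert_subset_iff]

theorem sq_mahlerMeasure_le_sum_sq_norm_coeff_sub {p : ℂ[X]} (hp : 0 < p.natDegree) :
    p.mahlerMeasure ^ 2 ≤ ∑ i ∈ p.support, ‖p.coeff i‖ ^ 2
      - ‖p.coeff 0‖ ^ 2 * ‖p.leadingCoeff‖ ^ 2 / ∑ i ∈ p.support, ‖p.coeff i‖ ^ 2 := by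
  set S := ∑ i ∈ p.support, ‖p.coeff i‖ ^ 2
  set a := ‖p.coeff 0‖
  set b := ‖p.leadingCoeff‖
  have hab : a ^ 2 + b ^ 2 ≤ S := sq_norm_coeff_zero_add_sq_norm_leadingCoeff_le hp
  have hp0 : p ≠ 0 := ne_zero_of_natDegree_gt hp
  have hb : 0 < b := norm_pos_iff.2 (leadingCoeff_ne_zero.2 hp0)
  have hS : 0 < S := by nlinarith [sq_nonneg a]
  set β : ℂ := -(p.coeff 0 * starRingEnd ℂ p.leadingCoeff) / S
  have hβ_norm : ‖β‖ = a * b / S := by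
    simp [β, a, b, Complex.norm_real, abs_of_pos hS]
  have hβ : ‖β‖ ≤ 1 := by
    rw [hβ_norm, div_le_one hS]
    nlinarith [sq_nonneg (a - b)]
  have hmid : ‖p.coeff 0 + β * p.leadingCoeff‖ = a * (1 - b ^ 2 / S) := by
    have : p.coeff 0 + β * p.leadingCoeff = p.coeff 0 * ((1 - b ^ 2 / S : ℝ) : ℂ) := by
      simp only [β, b, neg_div, neg_mul, div_mul_eq_mul_div, mul_assoc, Complex.conj_mul']
      push_cast
      ring
    rw [this, norm_mul, Complex.norm_real, Real.norm_of_nonneg]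
    rw [sub_nonneg, div_le_one hS]
    nlinarith [sq_nonneg a]
  have hlandau := mahlerMeasure_le_sqrt_sum_sq_norm_coeff (p * (X ^ p.natDegree + C β))
  rw [mahlerMeasure_mul, mahlerMeasure_X_pow_add_C hp.ne' hβ, mul_one,
    sum_sq_norm_coeff_mul_X_natDegree_add_C, hβ_norm, hmid] at hlandau
  calc p.mahlerMeasure ^ 2 ≤ _ := (Real.le_sqrt' (mahlerMeasure_pos_of_ne_zero hp0)).1 hlandau
    _ = S - a ^ 2 * b ^ 2 / S := by field_simp; ring

theorem eval_circleMap_ofFn {L : ℕ} (c : Fin L → ℂ) (t : ℝ) :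
    (ofFn L c).eval (circleMap 0 1 (2 * π * t)) =
      ∑ m : Fin L, c m * Complex.exp (2 * π * Complex.I * (m : ℕ) * t) := by
  rw [ofFn_eq_sum_monomial, eval_finsetSum]
  refine Finset.sum_congr rfl fun m _ => ?_
  rw [eval_monomial, circleMap_zero, Complex.ofReal_one, one_mul, ← Complex.exp_nat_mul]
  push_cast
  ring_nf

theorem sum_sq_norm_coeff_ofFn {L : ℕ} (hL : 1 ≤ L) (c : Fin L → ℂ) :
    ∑ i ∈ (ofFn L c).support, ‖(ofFn L c).coeff i‖ ^ 2 = ∑ m : Fin L, ‖c m‖ ^ 2 := by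
  rw [sum_sq_norm_coeff_eq_sum_range (ofFn_natDegree_lt hL c),
    ← Fin.sum_univ_eq_sum_range (fun i => ‖(ofFn L c).coeff i‖ ^ 2)]
  simp

theorem sq_mahlerMeasure_ofFn_lt {L : ℕ} (hL : 2 ≤ L) (c : Fin L → ℂ)
    (hc : ∀ m, c m = 0 ∨ ‖c m‖ = 1) : (ofFn L c).mahlerMeasure ^ 2 < L := by
  have hS := sum_sq_norm_coeff_ofFn (by omega) c
  by_cases! hzero : ∃ m, c m = 0
  · obtain ⟨m₀, hm₀⟩ := hzero
    have hlt : ∑ m : Fin L, ‖c m‖ ^ 2 < ∑ _m : Fin L, (1 : ℝ) :=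
      Finset.sum_lt_sum (fun m _ => by rcases hc m with h | h <;> simp [h])
        ⟨m₀, Finset.mem_univ _, by simp [hm₀]⟩
    have hlandau := mahlerMeasure_le_sqrt_sum_sq_norm_coeff (ofFn L c)
    rw [hS, Real.le_sqrt (mahlerMeasure_nonneg _) (by positivity)] at hlandau
    simpa using hlandau.trans_lt hlt
  · have hunit (m : Fin L) : ‖c m‖ = 1 := (hc m).resolve_left (hzero m)
    have hdeg : (ofFn L c).natDegree = L - 1 :=
      natDegree_eq_of_le_of_coeff_ne_zero (Nat.le_pred_of_lt (ofFn_natDegree_lt (by omega) c))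
        (by rw [ofFn_coeff_eq_val_of_lt _ (by omega)]; exact hzero _)
    have hcoeff0 : ‖(ofFn L c).coeff 0‖ = 1 := by
      rw [ofFn_coeff_eq_val_of_lt _ (by omega)]
      exact hunit _
    have hlead : ‖(ofFn L c).leadingCoeff‖ = 1 := by
      rw [leadingCoeff, hdeg, ofFn_coeff_eq_val_of_lt _ (by omega)]
      exact hunit _
    have hrefined := sq_mahlerMeasure_le_sum_sq_norm_coeff_sub (p := ofFn L c) (by omega)
    simp only [hS, hunit, hcoeff0, hlead, one_pow, Finset.sum_const, Finset.card_univ,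
      Fintype.card_fin, nsmul_eq_mul, mul_one] at hrefined
    have : (0 : ℝ) < 1 / L := by positivity
    linarith

end Polynomial

/-- **Mahler measure bound (key step of Theorems 4.1 and 4.6).** If
`p(t) = ∑_{m=0}^{L-1} c_m e^{2πimt}` where each coefficient is either zero or
of modulus one, and not all vanish, then `log|p|` is integrable on `[0,1]` and
`∫_0^1 log|p(t)| dt < (1/2) log L`. -/
theorem stmt_11 (L : ℕ) (hL : 2 ≤ L) (c : Fin L → ℂ)
    (hc : ∀ m, c m = 0 ∨ ‖c m‖ = 1) (hne : ∃ m, c m ≠ 0)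
    (p : ℝ → ℂ)
    (hp : ∀ t : ℝ, p t = ∑ m : Fin L,
      c m * Complex.exp (2 * (Real.pi : ℂ) * Complex.I * ((m : ℕ) : ℂ) * (t : ℂ))) :
    IntegrableOn (fun t => Real.log ‖p t‖) (Set.Icc 0 1) volume ∧
    ∫ t in Set.Icc (0:ℝ) 1, Real.log ‖p t‖ ∂volume < Real.log L / 2 := by
  have hpq (t : ℝ) : p t = (ofFn L c).eval (circleMap 0 1 (2 * π * t)) := by
    rw [hp, eval_circleMap_ofFn]
  have hq : ofFn L c ≠ 0 := by
    obtain ⟨m, hm⟩ := hne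
    exact fun h => hm (by simpa [h] using (ofFn_coeff_eq_val_of_lt c m.isLt).symm)
  have hcirc : CircleIntegrable (fun z => Real.log ‖(ofFn L c).eval z‖) 0 1 :=
    (circleIntegrable_def _ _ _).2 (ofFn L c).intervalIntegrable_mahlerMeasure
  simp only [hpq]
  refine ⟨hcirc.integrableOn_Icc_comp, ?_⟩
  rw [← circleAverage_eq_integral_Icc (fun z => Real.log ‖(ofFn L c).eval z‖),
    ← logMahlerMeasure_def, logMahlerMeasure_eq_log_MahlerMeasure]
  have hlog := Real.log_lt_log (pow_pos (mahlerMeasure_pos_of_ne_zero hq) 2)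
    (sq_mahlerMeasure_ofFn_lt hL c hc)
  rw [Real.log_pow] at hlog
  push_cast at hlog
  linarith
end

section
/- Let a ≥ 1 and d ≥ 1, let Q : ℝ^d → ℝ^d be a linear map, and for 1 ≤ i,j ≤ a let T_{ij} ⊂ ℝ^d be finite sets. Define recursively T^{(1)}_{ij} = T_{ij} and T^{(n+1)}_{ij} = ⋃_{ℓ=1}^{a} (T_{iℓ} + Q(T^{(n)}_{ℓj})) (Minkowski sums of sets). Assume that card(T^{(n)}_{ij}) = (M^n)_{ij} for all n ≥ 1 and all i,j, where M is the matrix with M_{ij} = card(T_{ij}). Define B^{(n)}(k)_{ij} = ∑_{t ∈ T^{(n)}_{ij}} e^{2πi⟨k,t⟩} for k ∈ ℝ^d, and B = B^{(1)}. Then for all n ≥ 1 and all k ∈ ℝ^d, B^{(n)}(k) = B(k)·B(Q^T k)···B((Q^T)^{n−1} k), where Q^T is the transpose of Q; equivalently, B^{(n+1)}(k) = B(k)·B^{(n)}(Q^T k). -/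
open scoped Pointwise

lemma aux_sum_add_finset {α : Type*} [DecidableEq α] [AddCommMonoid α]
    {A B : Finset α} (h : (A + B).card = A.card * B.card) (f : α → ℂ) :
    ∑ x ∈ A + B, f x = ∑ u ∈ A, ∑ v ∈ B, f (u + v) := by
  have himg : ((A ×ˢ B).image fun p : α × α => p.1 + p.2) = A + B :=
    Finset.image_add_product
  have hiff := Finset.card_image_iff (s := A ×ˢ B) (f := fun p : α × α => p.1 + p.2)
  rw [himg, h, Finset.card_product] at hiff
  have hinj := hiff.mp rfl
  rw [← himg, Finset.sum_image
    (fun p hp q hq heq => hinj (Finset.mem_coe.mpr hp) (Finset.mem_coe.mpr hq) heq),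
    Finset.sum_product]

lemma aux_sum_biUnion {ι α : Type*} [DecidableEq α] [DecidableEq ι]
    (s : Finset ι) (S : ι → Finset α)
    (h : (s.biUnion S).card = ∑ l ∈ s, (S l).card) (f : α → ℂ) :
    ∑ x ∈ s.biUnion S, f x = ∑ l ∈ s, ∑ x ∈ S l, f x := by
  induction s using Finset.induction with
  | empty => simp
  | @insert a s ha ih =>
    rw [Finset.biUnion_insert] at h ⊢
    rw [Finset.sum_insert ha] at h ⊢
    have h1 : ((S a) ∪ s.biUnion S).card ≤ (S a).card + (s.biUnion S).card :=
      Finset.card_union_le _ _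
    have h2 : (s.biUnion S).card ≤ ∑ l ∈ s, (S l).card := Finset.card_biUnion_le
    have h3 : (s.biUnion S).card = ∑ l ∈ s, (S l).card := by omega
    have h4 : ((S a) ∪ s.biUnion S).card = (S a).card + (s.biUnion S).card := by omega
    have hd : Disjoint (S a) (s.biUnion S) :=
      Finset.card_union_eq_card_add_card.mp h4
    rw [Finset.sum_union hd, ih h3]

/-- **Lemma 5.3.** For the displacement sets `T^{(n)}_{ij}` of level-`n`
supertiles of a stone inflation with expansion `Q` (with no coincidences, i.e.
`card T^{(n)}_{ij} = (M^n)_{ij}`), the Fourier matrices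
`B^{(n)}(k)_{ij} = ∑_{t ∈ T^{(n)}_{ij}} e^{2πi⟨k,t⟩}` satisfy the cocycle
relation `B^{(n)}(k) = B(k) B(Qᵀk) ⋯ B((Qᵀ)^{n-1}k)`, equivalently
`B^{(n+1)}(k) = B(k) B^{(n)}(Qᵀk)`. -/
theorem stmt_13 (a d : ℕ) (ha : 1 ≤ a) (hd : 1 ≤ d)
    (Q : Matrix (Fin d) (Fin d) ℝ)
    (T : Fin a → Fin a → Finset (Fin d → ℝ))
    (Tn : ℕ → Fin a → Fin a → Finset (Fin d → ℝ))
    (hTn1 : ∀ i j, Tn 1 i j = T i j)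
    (hTnsucc : ∀ n : ℕ, 1 ≤ n → ∀ i j, Tn (n + 1) i j =
      Finset.univ.biUnion (fun ℓ : Fin a =>
        T i ℓ + (Tn n ℓ j).image (fun t => Q.mulVec t)))
    (M : Matrix (Fin a) (Fin a) ℕ) (hM : ∀ i j, M i j = (T i j).card)
    (hcard : ∀ n : ℕ, 1 ≤ n → ∀ i j, (Tn n i j).card = (M ^ n) i j)
    (Bn : ℕ → (Fin d → ℝ) → Matrix (Fin a) (Fin a) ℂ)
    (hBn : ∀ n (k : Fin d → ℝ) (i j : Fin a), Bn n k i j =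
      ∑ t ∈ Tn n i j,
        Complex.exp (2 * (Real.pi : ℂ) * Complex.I * ((∑ s, k s * t s : ℝ) : ℂ))) :
    (∀ n : ℕ, 1 ≤ n → ∀ k : Fin d → ℝ,
      Bn n k = ((List.range n).map (fun i => Bn 1 ((Q.transpose ^ i).mulVec k))).prod) ∧
    (∀ n : ℕ, 1 ≤ n → ∀ k : Fin d → ℝ,
      Bn (n + 1) k = Bn 1 k * Bn n (Q.transpose.mulVec k)) := by
  classical
  have key : ∀ n : ℕ, 1 ≤ n → ∀ k : Fin d → ℝ,
      Bn (n + 1) k = Bn 1 k * Bn n (Q.transpose.mulVec k) := by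
    intro n hn k
    set k' := Q.transpose.mulVec k with hk'
    set f : (Fin d → ℝ) → ℂ := fun t =>
      Complex.exp (2 * (Real.pi : ℂ) * Complex.I * ((∑ s, k s * t s : ℝ) : ℂ)) with hf
    set g : (Fin d → ℝ) → ℂ := fun t =>
      Complex.exp (2 * (Real.pi : ℂ) * Complex.I * ((∑ s, k' s * t s : ℝ) : ℂ)) with hg
    have hsplit : ∀ u v : Fin d → ℝ, f (u + Q.mulVec v) = f u * g v := by
      intro u v
      have hdot : (∑ s, k s * Q.mulVec v s) = ∑ s, k' s * v s := by
        have h := Matrix.dotProduct_mulVec k Q v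
        simpa [dotProduct, hk', Matrix.mulVec_transpose] using h
      have hsum : (∑ s, k s * (u + Q.mulVec v) s)
          = (∑ s, k s * u s) + ∑ s, k' s * v s := by
        simp only [Pi.add_apply, mul_add, Finset.sum_add_distrib]
        rw [hdot]
      simp only [hf, hg, hsum]
      push_cast
      rw [mul_add, Complex.exp_add]
    ext i j
    rw [hBn, Matrix.mul_apply]
    rw [hTnsucc n hn i j]
    set S : Fin a → Finset (Fin d → ℝ) :=
      fun ℓ => T i ℓ + (Tn n ℓ j).image (fun t => Q.mulVec t) with hS
    have hcard1 : (Finset.univ.biUnion S).card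
        = ∑ ℓ : Fin a, (T i ℓ).card * (Tn n ℓ j).card := by
      have h := hcard (n + 1) (by omega) i j
      rw [hTnsucc n hn i j] at h
      rw [show (Finset.univ.biUnion S).card = (M ^ (n + 1)) i j from h,
        pow_succ', Matrix.mul_apply]
      exact Finset.sum_congr rfl fun ℓ _ => by rw [hM, hcard n hn]
    have hle1 : ∀ ℓ, (S ℓ).card ≤ (T i ℓ).card * (Tn n ℓ j).card := fun ℓ =>
      le_trans Finset.card_add_le (Nat.mul_le_mul_left _ Finset.card_image_le)
    have hle2 : (Finset.univ.biUnion S).card ≤ ∑ ℓ, (S ℓ).card :=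
      Finset.card_biUnion_le
    have heqsum : ∑ ℓ : Fin a, (S ℓ).card
        = ∑ ℓ : Fin a, (T i ℓ).card * (Tn n ℓ j).card :=
      le_antisymm (Finset.sum_le_sum fun ℓ _ => hle1 ℓ) (hcard1 ▸ hle2)
    have hSl : ∀ ℓ : Fin a, (S ℓ).card = (T i ℓ).card * (Tn n ℓ j).card := by
      intro ℓ
      by_contra hne
      have hlt : ∑ ℓ : Fin a, (S ℓ).card
          < ∑ ℓ : Fin a, (T i ℓ).card * (Tn n ℓ j).card :=
        Finset.sum_lt_sum (fun ℓ _ => hle1 ℓ)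
          ⟨ℓ, Finset.mem_univ _, lt_of_le_of_ne (hle1 ℓ) hne⟩
      exact absurd heqsum (ne_of_lt hlt)
    rw [aux_sum_biUnion _ S (hcard1.trans heqsum.symm) f]
    refine Finset.sum_congr rfl fun ℓ _ => ?_
    rcases (T i ℓ).eq_empty_or_nonempty with hemp | hne
    · have hBempty : Bn 1 k i ℓ = 0 := by
        rw [hBn, hTn1, hemp, Finset.sum_empty]
      rw [hBempty, zero_mul, hS]
      simp [hemp]
    · have hpos : 0 < (T i ℓ).card := Finset.card_pos.mpr hne
      have himle : ((Tn n ℓ j).image (fun t => Q.mulVec t)).card ≤ (Tn n ℓ j).card :=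
        Finset.card_image_le
      have hA : (S ℓ).card ≤ (T i ℓ).card * ((Tn n ℓ j).image (fun t => Q.mulVec t)).card :=
        Finset.card_add_le
      have himeq : ((Tn n ℓ j).image (fun t => Q.mulVec t)).card = (Tn n ℓ j).card := by
        refine le_antisymm himle ?_
        have := (hSl ℓ) ▸ hA
        exact Nat.le_of_mul_le_mul_left this hpos
      have hinj := Finset.card_image_iff.mp himeq
      have hScard : (S ℓ).card
          = (T i ℓ).card * ((Tn n ℓ j).image (fun t => Q.mulVec t)).card := by
        rw [himeq, hSl ℓ]
      rw [hS]
      rw [aux_sum_add_finset hScard f]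
      have hinner : ∀ u ∈ T i ℓ,
          (∑ v ∈ (Tn n ℓ j).image (fun t => Q.mulVec t), f (u + v))
            = (f u) * ∑ v ∈ Tn n ℓ j, g v := by
        intro u _
        rw [Finset.sum_image
          (fun p hp q hq heq => hinj (Finset.mem_coe.mpr hp) (Finset.mem_coe.mpr hq) heq)]
        rw [Finset.mul_sum]
        exact Finset.sum_congr rfl fun v _ => hsplit u v
      rw [Finset.sum_congr rfl hinner, ← Finset.sum_mul]
      congr 1
      · rw [hBn, hTn1]
      · rw [hBn]
  refine ⟨?_, key⟩
  have part1' : ∀ m : ℕ, ∀ k : Fin d → ℝ, Bn (m + 1) k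
      = ((List.range (m + 1)).map (fun i => Bn 1 ((Q.transpose ^ i).mulVec k))).prod := by
    intro m
    induction m with
    | zero =>
      intro k
      simp [List.range_succ, Matrix.one_mulVec]
    | succ m ih =>
      intro k
      rw [key (m + 1) (by omega) k, ih (Q.transpose.mulVec k)]
      conv_rhs => rw [List.range_succ_eq_map]
      simp only [List.map_cons, List.map_map, List.prod_cons]
      congr 1
      · simp [Matrix.one_mulVec]
      · have hfun : (fun i : ℕ => Bn 1 ((Q.transpose ^ i).mulVec (Q.transpose.mulVec k)))
            = (fun i => Bn 1 ((Q.transpose ^ i).mulVec k)) ∘ Nat.succ := by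
          funext i
          simp only [Function.comp_apply]
          rw [pow_succ, ← Matrix.mulVec_mulVec]
        rw [hfun]
  intro n hn k
  obtain ⟨m, rfl⟩ := Nat.exists_eq_add_of_le hn
  rw [Nat.add_comm 1 m]
  exact part1' m k
end
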